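/- arXiv:1701.08753 — 2 statements merged into one kernel-verified Lean document; each statement's English description precedes it below -/
import Mathlib

section
/- Almost monotonicity of the frequency function, real-variable form: let m ≥ 2 be an integer, C₀ > 0 and r₀ ∈ (0, 1]. Let D, H, E, G, F : (0, r₀] → ℝ be functions such that D and H are differentiable and strictly positive, D is nondecreasing, F is differentiable with F ≥ 0 and F' = H, and for every r ∈ (0, r₀]: (i) |D(r) − E(r)| ≤ C₀·F(r); (ii) |D'(r) − 2·G(r) − ((m−2)/r)·D(r)| ≤ C₀·( r·D(r) + √(D(r)·F(r)) ); (iii) |H'(r) − ((m−1)/r)·H(r) − 2·E(r)| ≤ C₀·r·H(r); (iv) E(r)² ≤ G(r)·H(r); (v) F(r) ≤ C₀·( r·H(r) + r²·D(r) ). Define the frequency I(r) := r·D(r)/H(r). Then there exist constants C₁ > 0 and r₁ ∈ (0, r₀], depending only on m and C₀, such that I(s) ≤ C₁·(1 + I(t)) for all 0 < s ≤ t ≤ r₁. -/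
/-!
Write `v = F / (r H)` (`massRatio`) and `I = r D / H` (`frequency`). Inserting (i), (iii) and (v)
into `v'` shows that for `r ≤ 1 / (3 C₀)` the Riccati inequality `2 C₀ r v' ≤ -v²` holds wherever
`v ≥ V := 1 + C₀`. Then `1 / v` decreases at least like `log r / (2 C₀)` as `r ↓ 0` while `v` stays
above `V`, which is impossible for a positive function; hence `F ≤ V r H`. With this bound,
(i)–(iv) give `I' ≥ -C₀ (3 V + 2) I` wherever `I ≥ 1` (the terms in `m` cancel), and integrating
`log I` from `s` up to the first radius where `I ≤ 1` (or up to `t`) gives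
`I(s) ≤ exp (C₀ (3 V + 2)) · max 1 (I t)`.
-/

open Set Real

theorem lt_of_deriv_nonpos_of_lt_right {v : ℝ → ℝ} {a b V : ℝ}
    (hcont : ContinuousOn v (Icc a b)) (hdiff : DifferentiableOn ℝ v (Ioo a b))
    (hderiv : ∀ x ∈ Ioo a b, V < v x → deriv v x ≤ 0) (hb : V < v b) :
    ∀ x ∈ Icc a b, V < v x := by
  intro x hx
  by_contra! hvx
  set S := Icc x b ∩ v ⁻¹' Iic V
  have hS : IsClosed S := (hcont.mono (Icc_subset_Icc_left hx.1)).preimage_isClosed_of_isClosed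
    isClosed_Icc isClosed_Iic
  have hSbdd : BddAbove S := ⟨b, fun y hy => hy.1.2⟩
  have hσ : sSup S ∈ S := hS.csSup_mem ⟨x, ⟨le_rfl, hx.2⟩, hvx⟩ hSbdd
  set σ := sSup S
  have hxσ : x ≤ σ := hσ.1.1
  have hgt : ∀ y ∈ Ioc σ b, V < v y := fun y hy => by
    by_contra! hvy
    exact (le_csSup hSbdd ⟨⟨hxσ.trans hy.1.le, hy.2⟩, hvy⟩).not_gt hy.1
  have hanti : AntitoneOn v (Icc σ b) := by
    have hsub : Ioo σ b ⊆ Ioo a b := Ioo_subset_Ioo_left (hx.1.trans hxσ)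
    refine antitoneOn_of_deriv_nonpos (convex_Icc σ b)
      (hcont.mono (Icc_subset_Icc_left (hx.1.trans hxσ))) ?_ ?_ <;> rw [interior_Icc]
    · exact hdiff.mono hsub
    · exact fun y hy => hderiv y (hsub hy) (hgt y (Ioo_subset_Ioc_self hy))
  exact (hb.trans_le ((hanti ⟨le_rfl, hσ.1.2⟩ ⟨hσ.1.2, le_rfl⟩ hσ.1.2).trans hσ.2)).false

theorem le_of_mul_deriv_le_neg_sq {v : ℝ → ℝ} {c V R : ℝ} (hc : 0 < c) (hV : 0 < V)
    (hR : 0 < R) (hcont : ContinuousOn v (Ioc 0 R)) (hdiff : DifferentiableOn ℝ v (Ioo 0 R))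
    (hode : ∀ r ∈ Ioo 0 R, V < v r → c * r * deriv v r ≤ -v r ^ 2) : v R ≤ V := by
  by_contra! hvR
  -- chosen so that `(log R - log x) / c = 1 / V`, which exceeds `1 / v R`
  set x := R * exp (-(c / V))
  have hx : 0 < x := by positivity
  have hxR : x ≤ R := mul_le_of_le_one_right hR.le (exp_le_one_iff.2 (by simp; positivity))
  have hIcc : Icc x R ⊆ Ioc 0 R := Icc_subset_Ioc_iff hxR |>.2 ⟨hx, le_rfl⟩
  have hIoo : Ioo x R ⊆ Ioo 0 R := Ioo_subset_Ioo_left hx.le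
  have hgt : ∀ y ∈ Icc x R, V < v y :=
    lt_of_deriv_nonpos_of_lt_right (hcont.mono hIcc) (hdiff.mono hIoo)
      (fun y hy hVy => by
        have hy0 := (hIoo hy).1
        nlinarith [hode y (hIoo hy) hVy, sq_nonneg (v y), mul_pos hc hy0]) hvR
  have hmono : MonotoneOn (fun y => (v y)⁻¹ - log y / c) (Icc x R) := by
    have hd : ∀ y ∈ Ioo x R, HasDerivAt (fun y => (v y)⁻¹ - log y / c)
        (-deriv v y / v y ^ 2 - y⁻¹ / c) y := fun y hy =>
      (((hdiff y (hIoo hy)).differentiableAt (isOpen_Ioo.mem_nhds (hIoo hy))).hasDerivAt.inv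
        (hV.trans (hgt y (Ioo_subset_Icc_self hy))).ne').sub
        ((hasDerivAt_log (hIoo hy).1.ne').div_const c)
    refine monotoneOn_of_deriv_nonneg (convex_Icc x R) ?_ ?_ ?_ <;> try rw [interior_Icc]
    · exact ((hcont.mono hIcc).inv₀ fun y hy => (hV.trans (hgt y hy)).ne').sub
        ((continuousOn_log.mono fun y hy => (hx.trans_le hy.1).ne').div_const c)
    · exact fun y hy => (hd y hy).differentiableAt.differentiableWithinAt
    · intro y hy
      have hy0 := (hIoo hy).1
      have hVy := hgt y (Ioo_subset_Icc_self hy)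
      rw [(hd y hy).deriv, sub_nonneg, div_le_div_iff₀ hc (by nlinarith), inv_mul_eq_div,
        div_le_iff₀ hy0]
      nlinarith [hode y (hIoo hy) hVy]
  have hlog : log x = log R - c / V := by
    rw [log_mul hR.ne' (exp_ne_zero _), log_exp, sub_eq_add_neg]
  have hx' := hmono ⟨le_rfl, hxR⟩ ⟨hxR, le_rfl⟩ hxR
  simp only [hlog, sub_div, div_div_cancel_left' hc.ne'] at hx'
  have : 0 < (v x)⁻¹ := inv_pos.2 (hV.trans (hgt x ⟨le_rfl, hxR⟩))
  have : (v R)⁻¹ < V⁻¹ := inv_strictAnti₀ hV hvR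
  linarith

theorem le_exp_mul_of_neg_mul_le_deriv {I : ℝ → ℝ} {K s t : ℝ} (hst : s ≤ t)
    (hcont : ContinuousOn I (Icc s t)) (hdiff : DifferentiableOn ℝ I (Ioo s t))
    (hpos : ∀ r ∈ Icc s t, 0 < I r) (hderiv : ∀ r ∈ Ioo s t, -K * I r ≤ deriv I r) :
    I s ≤ exp (K * (t - s)) * I t := by
  have hd : ∀ r ∈ Ioo s t, HasDerivAt (fun r => log (I r)) (deriv I r / I r) r := fun r hr =>
    ((hdiff r hr).differentiableAt (isOpen_Ioo.mem_nhds hr)).hasDerivAt.log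
      (hpos r (Ioo_subset_Icc_self hr)).ne'
  have hlog := (convex_Icc s t).mul_sub_le_image_sub_of_le_deriv (C := -K)
    (hcont.log fun r hr => (hpos r hr).ne')
    (by rw [interior_Icc]; exact fun r hr => (hd r hr).differentiableAt.differentiableWithinAt)
    (by
      rw [interior_Icc]
      intro r hr
      rw [(hd r hr).deriv, le_div_iff₀ (hpos r (Ioo_subset_Icc_self hr))]
      exact hderiv r hr)
    s ⟨le_rfl, hst⟩ t ⟨hst, le_rfl⟩ hst
  calc I s = exp (log (I s)) := (exp_log (hpos s ⟨le_rfl, hst⟩)).symm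
    _ ≤ exp (K * (t - s) + log (I t)) := exp_le_exp.2 (by linarith)
    _ = exp (K * (t - s)) * I t := by rw [exp_add, exp_log (hpos t ⟨hst, le_rfl⟩)]

theorem exists_forall_Ico_lt_and_le_max {I : ℝ → ℝ} {c s t : ℝ} (hst : s ≤ t)
    (hcont : ContinuousOn I (Icc s t)) :
    ∃ τ ∈ Icc s t, I τ ≤ max c (I t) ∧ ∀ r ∈ Ico s τ, c < I r := by
  by_cases hA : ∃ r ∈ Icc s t, I r ≤ c
  · set A := Icc s t ∩ I ⁻¹' Iic c
    have hAbdd : BddBelow A := ⟨s, fun r hr => hr.1.1⟩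
    have hτ : sInf A ∈ A :=
      (hcont.preimage_isClosed_of_isClosed isClosed_Icc isClosed_Iic).csInf_mem hA hAbdd
    refine ⟨sInf A, hτ.1, hτ.2.trans (le_max_left _ _), fun r hr => ?_⟩
    by_contra! hIr
    exact (csInf_le hAbdd ⟨⟨hr.1, hr.2.le.trans hτ.1.2⟩, hIr⟩).not_gt hr.2
  · push Not at hA
    exact ⟨t, ⟨hst, le_rfl⟩, le_max_right _ _, fun r hr => hA r ⟨hr.1, hr.2.le⟩⟩

theorem le_exp_mul_max_of_neg_mul_le_deriv {I : ℝ → ℝ} {K s t : ℝ} (hK : 0 ≤ K) (hst : s ≤ t)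
    (hdiff : DifferentiableOn ℝ I (Icc s t)) (hpos : ∀ r ∈ Icc s t, 0 < I r)
    (hderiv : ∀ r ∈ Ioo s t, 1 < I r → -K * I r ≤ deriv I r) :
    I s ≤ exp (K * (t - s)) * max 1 (I t) := by
  obtain ⟨τ, hτ, hIτ, hgt⟩ := exists_forall_Ico_lt_and_le_max (c := 1) hst hdiff.continuousOn
  have hsub : Icc s τ ⊆ Icc s t := Icc_subset_Icc_right hτ.2
  calc I s ≤ exp (K * (τ - s)) * I τ :=
        le_exp_mul_of_neg_mul_le_deriv hτ.1 (hdiff.continuousOn.mono hsub)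
          (hdiff.mono (Ioo_subset_Icc_self.trans hsub)) (fun r hr => hpos r (hsub hr))
          (fun r hr => hderiv r (Ioo_subset_Ioo_right hτ.2 hr) (hgt r (Ioo_subset_Ico_self hr)))
    _ ≤ exp (K * (t - s)) * max 1 (I t) := by
        gcongr
        exacts [(hpos τ hτ).le, hτ.2]

noncomputable def frequency (D H : ℝ → ℝ) (r : ℝ) : ℝ := r * D r / H r

noncomputable def massRatio (F H : ℝ → ℝ) (r : ℝ) : ℝ := F r / (r * H r)

theorem hasDerivAt_frequency {D H : ℝ → ℝ} {r d h : ℝ} (hD : HasDerivAt D d r)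
    (hH : HasDerivAt H h r) (hH0 : H r ≠ 0) :
    HasDerivAt (frequency D H) (((1 * D r + r * d) * H r - r * D r * h) / H r ^ 2) r :=
  ((hasDerivAt_id' r).mul hD).div hH hH0

theorem hasDerivAt_massRatio {F H : ℝ → ℝ} {r f h : ℝ} (hF : HasDerivAt F f r)
    (hH : HasDerivAt H h r) (hrH : r * H r ≠ 0) :
    HasDerivAt (massRatio F H) ((f * (r * H r) - F r * (1 * H r + r * h)) / (r * H r) ^ 2) r :=
  hF.div ((hasDerivAt_id' r).mul hH) hrH

theorem mul_mem_Icc_of_abs_sub_div_mul_sub_le {x a y z b r : ℝ} (hr : 0 < r)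
    (h : |x - a / r * y - z| ≤ b) :
    r * x ∈ Icc (a * y + r * z - r * b) (a * y + r * z + r * b) := by
  have hmul : r * (x - a / r * y - z) = r * x - a * y - r * z := by field_simp
  have := mul_le_mul_of_nonneg_left (abs_le.1 h).1 hr.le
  have := mul_le_mul_of_nonneg_left (abs_le.1 h).2 hr.le
  constructor <;> nlinarith

theorem two_mul_mul_massRatio_deriv_le_neg_sq {m C₀ V r D H E F H' : ℝ} (hm : 2 ≤ m) (hC₀ : 0 < C₀)
    (hV : 1 ≤ V) (hVC₀ : C₀ ≤ V ^ 2) (hr : 0 < r) (hrC₀ : 3 * C₀ * r ≤ 1) (hH : 0 < H)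
    (h1 : |D - E| ≤ C₀ * F) (h3 : |H' - (m - 1) / r * H - 2 * E| ≤ C₀ * r * H)
    (h5 : F ≤ C₀ * (r * H + r ^ 2 * D)) (hFV : V * (r * H) ≤ F) :
    2 * C₀ * r * ((H * (r * H) - F * (1 * H + r * H')) / (r * H) ^ 2) ≤ -(F / (r * H)) ^ 2 := by
  have hrH : 0 < r * H := mul_pos hr hH
  have hF : 0 ≤ F := by nlinarith
  have e3 := (mul_mem_Icc_of_abs_sub_div_mul_sub_le hr h3).1
  have e1 : D - C₀ * F ≤ E := by linarith [(abs_le.1 h1).2]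
  suffices 2 * C₀ * r * (H * (r * H) - F * (1 * H + r * H')) ≤ -F ^ 2 by
    rw [div_pow, ← neg_div, ← mul_div_assoc]
    exact div_le_div_of_nonneg_right this (by positivity)
  have hexpand : 2 * C₀ * r * (H * (r * H) - F * (1 * H + r * H')) ≤
      2 * C₀ * (r * H) ^ 2 - 4 * F ^ 2 + 4 * C₀ ^ 2 * r ^ 2 * F ^ 2 +
        2 * C₀ ^ 2 * r ^ 2 * (r * H) * F := by
    nlinarith [mul_le_mul_of_nonneg_left e3 (by positivity : 0 ≤ 2 * C₀ * r * F),
      mul_le_mul_of_nonneg_left e1 (by positivity : 0 ≤ 4 * C₀ * r ^ 2 * F),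
      mul_le_mul_of_nonneg_left h5 (by positivity : 0 ≤ 4 * F),
      mul_nonneg (by linarith : 0 ≤ m - 2) (by positivity : 0 ≤ 2 * C₀ * r * F * H)]
  have hrH_sq : C₀ * (r * H) ^ 2 ≤ F ^ 2 := by
    nlinarith [mul_le_mul hFV hFV (by positivity) (by positivity),
      mul_le_mul_of_nonneg_right hVC₀ (sq_nonneg (r * H))]
  have hCr : 9 * C₀ ^ 2 * r ^ 2 ≤ 1 := by nlinarith [mul_pos hC₀ hr]
  have hrH_le : r * H ≤ F := le_trans (by nlinarith) hFV
  nlinarith [mul_le_mul_of_nonneg_left hrH_le (by positivity : 0 ≤ 2 * C₀ ^ 2 * r ^ 2 * F),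
    mul_le_mul_of_nonneg_right hCr (sq_nonneg F)]

theorem neg_mul_mul_frequency_le_frequency_deriv {m C₀ V r D H E G F D' H' : ℝ} (hC₀ : 0 ≤ C₀)
    (hV : 1 ≤ V) (hr : 0 < r) (hD : 0 < D) (hH : 0 < H)
    (h1 : |D - E| ≤ C₀ * F)
    (h2 : |D' - 2 * G - (m - 2) / r * D| ≤ C₀ * (r * D + √(D * F)))
    (h3 : |H' - (m - 1) / r * H - 2 * E| ≤ C₀ * r * H) (h4 : E ^ 2 ≤ G * H)
    (hFV : F ≤ V * (r * H)) (hHD : H ≤ r * D) :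
    -(C₀ * (3 * V + 2) * r) * (r * D / H) ≤ ((1 * D + r * D') * H - r * D * H') / H ^ 2 := by
  rw [sub_right_comm] at h2
  have e2 := (mul_mem_Icc_of_abs_sub_div_mul_sub_le hr h2).1
  have e3 := (mul_mem_Icc_of_abs_sub_div_mul_sub_le hr h3).2
  have hsqrt : √(D * F) ≤ V * r * D := by
    refine sqrt_le_iff.2 ⟨by positivity, ?_⟩
    have := mul_le_mul_of_nonneg_left hFV hD.le
    have := mul_le_mul_of_nonneg_left hHD (by positivity : 0 ≤ D * V * r)
    nlinarith [mul_pos (mul_pos hr hD) (mul_pos hr hD)]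
  have hGH : -(C₀ * F * D) ≤ G * H - D * E := by
    nlinarith [sq_nonneg (E - D), mul_le_mul_of_nonneg_right (abs_le.1 h1).2 hD.le]
  suffices -(C₀ * (3 * V + 2) * r) * (r * D * H) ≤ (1 * D + r * D') * H - r * D * H' by
    rw [le_div_iff₀ (by positivity), mul_assoc, div_mul_eq_mul_div, sq, ← mul_assoc,
      mul_div_cancel_right₀ _ hH.ne']
    exact this
  have hexpand : 2 * r * (G * H - D * E) - 2 * C₀ * r ^ 2 * D * H - C₀ * r * H * √(D * F) ≤
      (1 * D + r * D') * H - r * D * H' := by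
    nlinarith [mul_le_mul_of_nonneg_left e2 hH.le, mul_le_mul_of_nonneg_left e3 hD.le]
  have hCF : C₀ * F * D ≤ C₀ * V * r * D * H := by
    nlinarith [mul_le_mul_of_nonneg_left hFV (by positivity : 0 ≤ C₀ * D)]
  nlinarith [mul_le_mul_of_nonneg_left hsqrt (by positivity : 0 ≤ C₀ * r * H)]

theorem massRatio_le_of_first_variation {m : ℕ} (hm : 2 ≤ m) {C₀ V r₀ : ℝ} {D H E F : ℝ → ℝ}
    (hC₀ : 0 < C₀) (hV : 1 ≤ V) (hVC₀ : C₀ ≤ V ^ 2)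
    (hHdiff : ∀ r ∈ Ioc (0 : ℝ) r₀, DifferentiableAt ℝ H r)
    (hHpos : ∀ r ∈ Ioc (0 : ℝ) r₀, 0 < H r)
    (hFdiff : ∀ r ∈ Ioc (0 : ℝ) r₀, DifferentiableAt ℝ F r)
    (hF' : ∀ r ∈ Ioc (0 : ℝ) r₀, deriv F r = H r)
    (h1 : ∀ r ∈ Ioc (0 : ℝ) r₀, |D r - E r| ≤ C₀ * F r)
    (h3 : ∀ r ∈ Ioc (0 : ℝ) r₀,
      |deriv H r - (((m : ℝ) - 1) / r) * H r - 2 * E r| ≤ C₀ * r * H r)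
    (h5 : ∀ r ∈ Ioc (0 : ℝ) r₀, F r ≤ C₀ * (r * H r + r ^ 2 * D r)) :
    ∀ R ∈ Ioc (0 : ℝ) r₀, 3 * C₀ * R ≤ 1 → massRatio F H R ≤ V := by
  intro R hR hRC₀
  have hsub : Ioc 0 R ⊆ Ioc 0 r₀ := Ioc_subset_Ioc_right hR.2
  have hv : ∀ r ∈ Ioc 0 R, HasDerivAt (massRatio F H)
      ((H r * (r * H r) - F r * (1 * H r + r * deriv H r)) / (r * H r) ^ 2) r := fun r hr =>
    hF' r (hsub hr) ▸ hasDerivAt_massRatio (hFdiff r (hsub hr)).hasDerivAt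
      (hHdiff r (hsub hr)).hasDerivAt (mul_pos hr.1 (hHpos r (hsub hr))).ne'
  refine le_of_mul_deriv_le_neg_sq (c := 2 * C₀) (by positivity) (by linarith) hR.1
    (fun r hr => (hv r hr).continuousAt.continuousWithinAt)
    (fun r hr => (hv r (Ioo_subset_Ioc_self hr)).differentiableAt.differentiableWithinAt)
    fun r hr hVr => ?_
  have hr' := hsub (Ioo_subset_Ioc_self hr)
  rw [(hv r (Ioo_subset_Ioc_self hr)).deriv]
  exact two_mul_mul_massRatio_deriv_le_neg_sq (by exact_mod_cast hm) hC₀ hV hVC₀ hr.1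
    (by nlinarith [hr.2]) (hHpos r hr') (h1 r hr') (h3 r hr') (h5 r hr')
    ((le_div_iff₀ (mul_pos hr.1 (hHpos r hr'))).1 hVr.le)

theorem neg_mul_frequency_le_deriv_frequency {m : ℕ} {C₀ V r₀ : ℝ} {D H E G F : ℝ → ℝ}
    (hC₀ : 0 ≤ C₀) (hV : 1 ≤ V)
    (hDdiff : ∀ r ∈ Ioc (0 : ℝ) r₀, DifferentiableAt ℝ D r)
    (hHdiff : ∀ r ∈ Ioc (0 : ℝ) r₀, DifferentiableAt ℝ H r)
    (hDpos : ∀ r ∈ Ioc (0 : ℝ) r₀, 0 < D r)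
    (hHpos : ∀ r ∈ Ioc (0 : ℝ) r₀, 0 < H r)
    (h1 : ∀ r ∈ Ioc (0 : ℝ) r₀, |D r - E r| ≤ C₀ * F r)
    (h2 : ∀ r ∈ Ioc (0 : ℝ) r₀,
      |deriv D r - 2 * G r - (((m : ℝ) - 2) / r) * D r| ≤
        C₀ * (r * D r + Real.sqrt (D r * F r)))
    (h3 : ∀ r ∈ Ioc (0 : ℝ) r₀,
      |deriv H r - (((m : ℝ) - 1) / r) * H r - 2 * E r| ≤ C₀ * r * H r)
    (h4 : ∀ r ∈ Ioc (0 : ℝ) r₀, (E r) ^ 2 ≤ G r * H r) :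
    ∀ r ∈ Ioc (0 : ℝ) r₀, r ≤ 1 → massRatio F H r ≤ V → 1 < frequency D H r →
      -(C₀ * (3 * V + 2)) * frequency D H r ≤ deriv (frequency D H) r := by
  intro r hr hr1 hFV hI
  have hH := hHpos r hr
  have hHD : H r ≤ r * D r := by
    rw [frequency, lt_div_iff₀ hH, one_mul] at hI
    exact hI.le
  have hK : 0 ≤ C₀ * (3 * V + 2) * frequency D H r := by positivity
  rw [(hasDerivAt_frequency (hDdiff r hr).hasDerivAt (hHdiff r hr).hasDerivAt hH.ne').deriv]
  calc -(C₀ * (3 * V + 2)) * frequency D H r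
      ≤ -(C₀ * (3 * V + 2) * r) * frequency D H r := by
        linarith [mul_le_mul_of_nonneg_left hr1 hK]
    _ ≤ _ := neg_mul_mul_frequency_le_frequency_deriv hC₀ hV hr.1 (hDpos r hr) hH (h1 r hr)
        (h2 r hr) (h3 r hr) (h4 r hr) ((div_le_iff₀ (mul_pos hr.1 hH)).1 hFV) hHD

theorem frequency_almost_monotone_general (m : ℕ) (hm : 2 ≤ m) (C₀ r₀ : ℝ) (hC₀ : 0 < C₀)
    (hr₀ : 0 < r₀) (hr₀1 : r₀ ≤ 1) (D H E G F : ℝ → ℝ)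
    (hDdiff : ∀ r ∈ Ioc (0 : ℝ) r₀, DifferentiableAt ℝ D r)
    (hHdiff : ∀ r ∈ Ioc (0 : ℝ) r₀, DifferentiableAt ℝ H r)
    (hDpos : ∀ r ∈ Ioc (0 : ℝ) r₀, 0 < D r)
    (hHpos : ∀ r ∈ Ioc (0 : ℝ) r₀, 0 < H r)
    (hFdiff : ∀ r ∈ Ioc (0 : ℝ) r₀, DifferentiableAt ℝ F r)
    (hF' : ∀ r ∈ Ioc (0 : ℝ) r₀, deriv F r = H r)
    (h1 : ∀ r ∈ Ioc (0 : ℝ) r₀, |D r - E r| ≤ C₀ * F r)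
    (h2 : ∀ r ∈ Ioc (0 : ℝ) r₀,
      |deriv D r - 2 * G r - (((m : ℝ) - 2) / r) * D r| ≤
        C₀ * (r * D r + Real.sqrt (D r * F r)))
    (h3 : ∀ r ∈ Ioc (0 : ℝ) r₀,
      |deriv H r - (((m : ℝ) - 1) / r) * H r - 2 * E r| ≤ C₀ * r * H r)
    (h4 : ∀ r ∈ Ioc (0 : ℝ) r₀, (E r) ^ 2 ≤ G r * H r)
    (h5 : ∀ r ∈ Ioc (0 : ℝ) r₀, F r ≤ C₀ * (r * H r + r ^ 2 * D r)) :
    ∃ C₁ : ℝ, 0 < C₁ ∧ ∃ r₁ : ℝ, 0 < r₁ ∧ r₁ ≤ r₀ ∧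
      ∀ s t : ℝ, 0 < s → s ≤ t → t ≤ r₁ →
        s * D s / H s ≤ C₁ * (1 + t * D t / H t) := by
  set V := 1 + C₀
  set K := C₀ * (3 * V + 2)
  set r₁ := min r₀ (1 / (3 * C₀))
  refine ⟨exp K, exp_pos K, r₁, lt_min hr₀ (by positivity), min_le_left _ _,
    fun s t hs hst ht => ?_⟩
  have hIcc : ∀ r ∈ Icc s t, r ∈ Ioc 0 r₀ ∧ r ≤ 1 ∧ 3 * C₀ * r ≤ 1 := fun r hr =>
    have hr₁ : r ≤ r₁ := hr.2.trans ht
    have := (le_div_iff₀ (by positivity)).1 (hr₁.trans (min_le_right _ _))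
    ⟨⟨hs.trans_le hr.1, hr₁.trans (min_le_left _ _)⟩, hr₁.trans ((min_le_left _ _).trans hr₀1),
      by linarith⟩
  have hmass := massRatio_le_of_first_variation (V := V) hm hC₀ (by linarith) (by nlinarith)
    hHdiff hHpos hFdiff hF' h1 h3 h5
  have hIdiff : DifferentiableOn ℝ (frequency D H) (Icc s t) := fun r hr =>
    (hasDerivAt_frequency (hDdiff r (hIcc r hr).1).hasDerivAt (hHdiff r (hIcc r hr).1).hasDerivAt
      (hHpos r (hIcc r hr).1).ne').differentiableAt.differentiableWithinAt
  have hIpos : ∀ r ∈ Icc s t, 0 < frequency D H r := fun r hr =>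
    div_pos (mul_pos (hIcc r hr).1.1 (hDpos r (hIcc r hr).1)) (hHpos r (hIcc r hr).1)
  calc frequency D H s ≤ exp (K * (t - s)) * max 1 (frequency D H t) :=
        le_exp_mul_max_of_neg_mul_le_deriv (by positivity) hst hIdiff hIpos fun r hr hI =>
          have hr' := hIcc r (Ioo_subset_Icc_self hr)
          neg_mul_frequency_le_deriv_frequency hC₀.le (by linarith) hDdiff hHdiff hDpos hHpos h1 h2
            h3 h4 r hr'.1 hr'.2.1 (hmass r hr'.1 hr'.2.2) hI
    _ ≤ exp K * (1 + frequency D H t) := by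
        gcongr
        · exact mul_le_of_le_one_right (by positivity) (by linarith [hIcc t ⟨hst, le_rfl⟩])
        · exact max_le (by linarith [hIpos t ⟨hst, le_rfl⟩]) (by linarith)

/-- Almost monotonicity of the frequency function, real-variable form. -/
theorem frequency_almost_monotone (m : ℕ) (hm : 2 ≤ m) (C₀ r₀ : ℝ) (hC₀ : 0 < C₀)
    (hr₀ : 0 < r₀) (hr₀1 : r₀ ≤ 1) (D H E G F : ℝ → ℝ)
    (hDdiff : ∀ r ∈ Ioc (0 : ℝ) r₀, DifferentiableAt ℝ D r)
    (hHdiff : ∀ r ∈ Ioc (0 : ℝ) r₀, DifferentiableAt ℝ H r)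
    (hDpos : ∀ r ∈ Ioc (0 : ℝ) r₀, 0 < D r)
    (hHpos : ∀ r ∈ Ioc (0 : ℝ) r₀, 0 < H r)
    (hDmono : MonotoneOn D (Ioc (0 : ℝ) r₀))
    (hFdiff : ∀ r ∈ Ioc (0 : ℝ) r₀, DifferentiableAt ℝ F r)
    (hFnonneg : ∀ r ∈ Ioc (0 : ℝ) r₀, 0 ≤ F r)
    (hF' : ∀ r ∈ Ioc (0 : ℝ) r₀, deriv F r = H r)
    (h1 : ∀ r ∈ Ioc (0 : ℝ) r₀, |D r - E r| ≤ C₀ * F r)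
    (h2 : ∀ r ∈ Ioc (0 : ℝ) r₀,
      |deriv D r - 2 * G r - (((m : ℝ) - 2) / r) * D r| ≤
        C₀ * (r * D r + Real.sqrt (D r * F r)))
    (h3 : ∀ r ∈ Ioc (0 : ℝ) r₀,
      |deriv H r - (((m : ℝ) - 1) / r) * H r - 2 * E r| ≤ C₀ * r * H r)
    (h4 : ∀ r ∈ Ioc (0 : ℝ) r₀, (E r) ^ 2 ≤ G r * H r)
    (h5 : ∀ r ∈ Ioc (0 : ℝ) r₀, F r ≤ C₀ * (r * H r + r ^ 2 * D r)) :
    ∃ C₁ : ℝ, 0 < C₁ ∧ ∃ r₁ : ℝ, 0 < r₁ ∧ r₁ ≤ r₀ ∧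
      ∀ s t : ℝ, 0 < s → s ≤ t → t ≤ r₁ →
        s * D s / H s ≤ C₁ * (1 + t * D t / H t) :=
  frequency_almost_monotone_general m hm C₀ r₀ hC₀ hr₀ hr₀1 D H E G F hDdiff hHdiff hDpos hHpos
    hFdiff hF' h1 h2 h3 h4 h5
end

section
/- Improved almost monotonicity of the frequency, real-variable form: let m ≥ 2 be an integer, C₀ > 0 and r₀ ∈ (0, 1]. Let D, H, E, G, F : (0, r₀] → ℝ be functions such that D and H are differentiable and strictly positive, D is nondecreasing, F is differentiable with F ≥ 0 and F' = H, and for every r ∈ (0, r₀]: (i) |D(r) − E(r)| ≤ C₀·F(r); (ii) |D'(r) − 2·G(r) − ((m−2)/r)·D(r)| ≤ C₀·( r·D(r) + √(D(r)·F(r)) ); (iii) |H'(r) − ((m−1)/r)·H(r) − 2·E(r)| ≤ C₀·r·H(r); (iv) E(r)² ≤ G(r)·H(r); and the strengthened Poincaré-type bound (v') F(r) ≤ C₀·r²·D(r). Set I(r) := r·D(r)/H(r). Then there exist r₁ ∈ (0, r₀], depending only on m and C₀, and λ > 0, depending only on m, C₀ and the value I(r₁), such that the function r ↦ e^{λ·r}·I(r)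 is nondecreasing on (0, r₁]; in particular the limit of I(r) as r → 0⁺ exists. -/
/-!
Choose `r₁ ≤ 1` with `C₀ r₁ ≤ 1/2`. Then (v') gives `C₀ F ≤ D/4`, so `|D - E| ≤ D/4` by (i); in
particular `E ≥ 0`, and (iii) yields `H' ≥ -C₀ r H`, i.e. `e^{C₀ r²/2} H` is nondecreasing. Hence
`H ≤ e^{C₀/2} H(r)` on `(0, r]`, and integrating `F' = H` from `0` (where `F(ρ) ≤ C₀ ρ² D(r) → 0`)
gives `F(r) ≤ e^{C₀/2} H(r) r`.

In `H² (r D / H)' = (D + r D') H - r D H'` the leading terms of (ii) and (iii) cancel, leaving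
`2r (G H - E D) ≥ 2r E (E - D) ≥ -(5/2) C₀ r D F` by (iv) and (i). With the two bounds on `F`, every
error term is at most a constant times `r² D H ≤ r D H`, that is `(log I)' ≥ -λ`.
-/

open Set Filter
open scoped Topology

theorem monotoneOn_of_differentiableAt_of_deriv_nonneg {f : ℝ → ℝ} {s : Set ℝ} (hs : Convex ℝ s)
    (hf : ∀ x ∈ s, DifferentiableAt ℝ f x) (hf' : ∀ x ∈ s, 0 ≤ deriv f x) : MonotoneOn f s :=
  monotoneOn_of_deriv_nonneg hs (fun x hx => (hf x hx).continuousAt.continuousWithinAt)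
    (fun x hx => (hf x (interior_subset hx)).differentiableWithinAt)
    fun x hx => hf' x (interior_subset hx)

theorem le_exp_mul_of_neg_mul_le_deriv_s8 {H : ℝ → ℝ} {C R : ℝ} (hC : 0 ≤ C) (hR : R ≤ 1)
    (hdiff : ∀ t ∈ Ioc 0 R, DifferentiableAt ℝ H t) (hnonneg : ∀ t ∈ Ioc 0 R, 0 ≤ H t)
    (hderiv : ∀ t ∈ Ioc 0 R, -(C * t * H t) ≤ deriv H t) {s r : ℝ} (hs : s ∈ Ioc 0 R)
    (hr : r ∈ Ioc 0 R) (hsr : s ≤ r) : H s ≤ Real.exp (C / 2) * H r := by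
  have hg : ∀ t ∈ Ioc 0 R, HasDerivAt (fun u => Real.exp (C * u ^ 2 / 2) * H u)
      (Real.exp (C * t ^ 2 / 2) * (C * t * H t + deriv H t)) t := by
    intro t ht
    refine ((((hasDerivAt_pow 2 t).const_mul C).div_const 2).exp.fun_mul
      (hdiff t ht).hasDerivAt).congr_deriv ?_
    norm_num
    ring
  have hmono : MonotoneOn (fun u => Real.exp (C * u ^ 2 / 2) * H u) (Ioc 0 R) :=
    monotoneOn_of_differentiableAt_of_deriv_nonneg (convex_Ioc 0 R)
      (fun t ht => (hg t ht).differentiableAt) fun t ht =>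
        (hg t ht).deriv ▸ mul_nonneg (Real.exp_pos _).le (by linarith [hderiv t ht])
  have hr1 : r ^ 2 ≤ 1 := pow_le_one₀ hr.1.le (hr.2.trans hR)
  calc H s ≤ Real.exp (C * s ^ 2 / 2) * H s :=
        le_mul_of_one_le_left (hnonneg s hs) (Real.one_le_exp (by positivity))
    _ ≤ Real.exp (C * r ^ 2 / 2) * H r := hmono hs hr hsr
    _ ≤ Real.exp (C / 2) * H r := by
        gcongr
        · exact hnonneg r hr
        · nlinarith

theorem le_mul_of_deriv_le_of_le_mul {F : ℝ → ℝ} {c K r : ℝ} (hr : 0 < r)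
    (hdiff : ∀ t ∈ Ioc 0 r, DifferentiableAt ℝ F t) (hderiv : ∀ t ∈ Ioc 0 r, deriv F t ≤ c)
    (hsmall : ∀ t ∈ Ioc 0 r, F t ≤ K * t) : F r ≤ c * r := by
  have hincr : ∀ ρ ∈ Ioc 0 r, F r ≤ c * r + (K - c) * ρ := by
    intro ρ hρ
    have := (convex_Ioc 0 r).image_sub_le_mul_sub_of_deriv_le
      (fun t ht => (hdiff t ht).continuousAt.continuousWithinAt)
      (fun t ht => (hdiff t (interior_subset ht)).differentiableWithinAt)
      (fun t ht => hderiv t (interior_subset ht)) ρ hρ r (right_mem_Ioc.2 hr) hρ.2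
    linarith [hsmall ρ hρ]
  have hlim : Tendsto (fun ρ => c * r + (K - c) * ρ) (𝓝[>] 0) (𝓝 (c * r)) := by
    have hcont : Continuous fun ρ : ℝ => c * r + (K - c) * ρ := by fun_prop
    simpa using (hcont.tendsto 0).mono_left nhdsWithin_le_nhds
  exact ge_of_tendsto hlim (mem_of_superset (Ioc_mem_nhdsGT hr) hincr)

theorem le_exp_mul_mul_of_deriv_eq {F H D : ℝ → ℝ} {C R : ℝ} (hC : 0 ≤ C) (hR : R ≤ 1)
    (hHdiff : ∀ t ∈ Ioc 0 R, DifferentiableAt ℝ H t) (hHnonneg : ∀ t ∈ Ioc 0 R, 0 ≤ H t)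
    (hH' : ∀ t ∈ Ioc 0 R, -(C * t * H t) ≤ deriv H t)
    (hFdiff : ∀ t ∈ Ioc 0 R, DifferentiableAt ℝ F t) (hF' : ∀ t ∈ Ioc 0 R, deriv F t = H t)
    (hDnonneg : ∀ t ∈ Ioc 0 R, 0 ≤ D t) (hDmono : MonotoneOn D (Ioc 0 R))
    (hF : ∀ t ∈ Ioc 0 R, F t ≤ C * t ^ 2 * D t) {r : ℝ} (hr : r ∈ Ioc 0 R) :
    F r ≤ Real.exp (C / 2) * H r * r := by
  have hsub : Ioc 0 r ⊆ Ioc 0 R := Ioc_subset_Ioc_right hr.2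
  refine le_mul_of_deriv_le_of_le_mul (K := C * D r) hr.1 (fun t ht => hFdiff t (hsub ht))
    (fun t ht => ?_) fun t ht => ?_
  · rw [hF' t (hsub ht)]
    exact le_exp_mul_of_neg_mul_le_deriv_s8 hC hR hHdiff hHnonneg hH' (hsub ht) hr ht.2
  · have ht2 : t ^ 2 ≤ t := by nlinarith [ht.1, ht.2.trans (hr.2.trans hR)]
    calc F t ≤ C * t ^ 2 * D t := hF t (hsub ht)
      _ ≤ C * t ^ 2 * D r := by gcongr; exact hDmono (hsub ht) hr ht.2
      _ ≤ C * D r * t := by nlinarith [mul_nonneg hC (hDnonneg r hr)]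

theorem abs_sub_le_div_four_of_le_mul_sq {C t d e f : ℝ} (hC : 0 ≤ C) (ht : 0 ≤ t)
    (hCt : C * t ≤ 1 / 2) (hd : 0 ≤ d) (h1 : |d - e| ≤ C * f) (h5 : f ≤ C * t ^ 2 * d) :
    |d - e| ≤ d / 4 := by
  have hCf : C * f ≤ (C * t) ^ 2 * d := by nlinarith
  have hCt2 : (C * t) ^ 2 ≤ 1 / 4 := by nlinarith [mul_nonneg hC ht]
  nlinarith

theorem neg_mul_le_frequency_numerator {m C K t d h e g f d' h' : ℝ} (hC : 0 ≤ C) (ht : 0 < t)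
    (ht1 : t ≤ 1) (hd : 0 < d) (hh : 0 < h) (hf : 0 ≤ f) (hde : |d - e| ≤ d / 4)
    (h1 : |d - e| ≤ C * f) (h2 : |d' - 2 * g - (m - 2) / t * d| ≤ C * (t * d + √(d * f)))
    (h3 : |h' - (m - 1) / t * h - 2 * e| ≤ C * t * h) (h4 : e ^ 2 ≤ g * h)
    (h5 : f ≤ C * t ^ 2 * d) (hfh : f ≤ K * h * t) :
    -(C * (2 + √C + 5 / 2 * K) * (t * d * h)) ≤ (d + t * d') * h - t * d * h' := by
  obtain ⟨hde₁, hde₂⟩ := abs_le.mp hde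
  have hK : 0 ≤ K := by
    by_contra! hK
    nlinarith [mul_pos hh ht]
  have hcross : -(5 / 4 * d * (C * f)) ≤ g * h - e * d :=
    calc -(5 / 4 * d * (C * f)) ≤ e * -(C * f) := by
          nlinarith [mul_le_mul_of_nonneg_right (by linarith : e ≤ 5 / 4 * d) (mul_nonneg hC hf)]
      _ ≤ e * (e - d) := mul_le_mul_of_nonneg_left (by linarith [(abs_le.mp h1).2]) (by linarith)
      _ ≤ g * h - e * d := by nlinarith
  have hsqrt : √(d * f) ≤ √C * (t * d) := by
    rw [← Real.sqrt_sq (by positivity : 0 ≤ t * d), ← Real.sqrt_mul hC]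
    exact Real.sqrt_le_sqrt (by nlinarith)
  have hD' : 2 * g * t + (m - 2) * d - C * (t * d + √(d * f)) * t ≤ t * d' := by
    have := mul_le_mul_of_nonneg_right (abs_le.mp h2).1 ht.le
    rw [show (d' - 2 * g - (m - 2) / t * d) * t = t * d' - 2 * g * t - (m - 2) * d by
      field_simp] at this
    linarith
  have hH' : t * h' ≤ (m - 1) * h + 2 * e * t + C * t ^ 2 * h := by
    have := mul_le_mul_of_nonneg_right (abs_le.mp h3).2 ht.le
    rw [show (h' - (m - 1) / t * h - 2 * e) * t = t * h' - (m - 1) * h - 2 * e * t by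
      field_simp] at this
    linarith
  have ht2 : t ^ 2 * (d * h) ≤ t * (d * h) :=
    mul_le_mul_of_nonneg_right (by nlinarith) (mul_pos hd hh).le
  linarith [mul_le_mul_of_nonneg_right hD' hh.le, mul_le_mul_of_nonneg_right hH' hd.le,
    mul_le_mul_of_nonneg_left hcross ht.le,
    mul_le_mul_of_nonneg_left hfh (by positivity : 0 ≤ C * t * d),
    mul_le_mul_of_nonneg_left hsqrt (by positivity : 0 ≤ C * t * h),
    mul_le_mul_of_nonneg_left ht2 (by positivity : 0 ≤ C * (2 + √C + 5 / 2 * K))]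

theorem monotoneOn_exp_mul_mul_div {D H : ℝ → ℝ} {lam : ℝ} {s : Set ℝ} (hs : Convex ℝ s)
    (hD : ∀ t ∈ s, DifferentiableAt ℝ D t) (hH : ∀ t ∈ s, DifferentiableAt ℝ H t)
    (hHpos : ∀ t ∈ s, 0 < H t)
    (hnum : ∀ t ∈ s,
      -(lam * (t * D t * H t)) ≤ (D t + t * deriv D t) * H t - t * D t * deriv H t) :
    MonotoneOn (fun r => Real.exp (lam * r) * (r * D r / H r)) s := by
  have hderiv : ∀ t ∈ s, HasDerivAt (fun r => Real.exp (lam * r) * (r * D r / H r))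
      (Real.exp (lam * t) / H t ^ 2 * (lam * (t * D t * H t) +
        ((D t + t * deriv D t) * H t - t * D t * deriv H t))) t := by
    intro t ht
    refine (((hasDerivAt_id' t).const_mul lam).exp.fun_mul
      (((hasDerivAt_id' t).fun_mul (hD t ht).hasDerivAt).fun_div (hH t ht).hasDerivAt
        (hHpos t ht).ne')).congr_deriv ?_
    field_simp
  exact monotoneOn_of_differentiableAt_of_deriv_nonneg hs
    (fun t ht => (hderiv t ht).differentiableAt) fun t ht =>
      (hderiv t ht).deriv ▸ mul_nonneg (by positivity) (by linarith [hnum t ht])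

theorem monotoneOn_exp_mul_frequency {m C R : ℝ} {D H E G F : ℝ → ℝ} (hm : 1 ≤ m) (hC : 0 ≤ C)
    (hR : R ≤ 1) (hCR : C * R ≤ 1 / 2)
    (hDdiff : ∀ r ∈ Ioc 0 R, DifferentiableAt ℝ D r)
    (hHdiff : ∀ r ∈ Ioc 0 R, DifferentiableAt ℝ H r)
    (hDpos : ∀ r ∈ Ioc 0 R, 0 < D r) (hHpos : ∀ r ∈ Ioc 0 R, 0 < H r)
    (hDmono : MonotoneOn D (Ioc 0 R))
    (hFdiff : ∀ r ∈ Ioc 0 R, DifferentiableAt ℝ F r)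
    (hFnonneg : ∀ r ∈ Ioc 0 R, 0 ≤ F r) (hF' : ∀ r ∈ Ioc 0 R, deriv F r = H r)
    (h1 : ∀ r ∈ Ioc 0 R, |D r - E r| ≤ C * F r)
    (h2 : ∀ r ∈ Ioc 0 R, |deriv D r - 2 * G r - (m - 2) / r * D r| ≤ C * (r * D r + √(D r * F r)))
    (h3 : ∀ r ∈ Ioc 0 R, |deriv H r - (m - 1) / r * H r - 2 * E r| ≤ C * r * H r)
    (h4 : ∀ r ∈ Ioc 0 R, E r ^ 2 ≤ G r * H r)
    (h5' : ∀ r ∈ Ioc 0 R, F r ≤ C * r ^ 2 * D r) :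
    MonotoneOn (fun r => Real.exp (C * (2 + √C + 5 / 2 * Real.exp (C / 2)) * r) * (r * D r / H r))
      (Ioc 0 R) := by
  have hDE : ∀ r ∈ Ioc 0 R, |D r - E r| ≤ D r / 4 := fun r hr =>
    abs_sub_le_div_four_of_le_mul_sq hC hr.1.le
      ((mul_le_mul_of_nonneg_left hr.2 hC).trans hCR) (hDpos r hr).le (h1 r hr) (h5' r hr)
  have hH' : ∀ r ∈ Ioc 0 R, -(C * r * H r) ≤ deriv H r := fun r hr => by
    have hm1 : 0 ≤ (m - 1) / r * H r :=
      mul_nonneg (div_nonneg (by linarith) hr.1.le) (hHpos r hr).le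
    linarith [(abs_le.mp (h3 r hr)).1, (abs_le.mp (hDE r hr)).2, hDpos r hr]
  have hFH : ∀ r ∈ Ioc 0 R, F r ≤ Real.exp (C / 2) * H r * r := fun r hr =>
    le_exp_mul_mul_of_deriv_eq hC hR hHdiff (fun t ht => (hHpos t ht).le) hH' hFdiff hF'
      (fun t ht => (hDpos t ht).le) hDmono h5' hr
  exact monotoneOn_exp_mul_mul_div (convex_Ioc 0 R) hDdiff hHdiff hHpos fun r hr =>
    neg_mul_le_frequency_numerator hC hr.1 (hr.2.trans hR) (hDpos r hr) (hHpos r hr)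
      (hFnonneg r hr) (hDE r hr) (h1 r hr) (h2 r hr) (h3 r hr) (h4 r hr) (h5' r hr) (hFH r hr)

theorem exists_tendsto_nhdsGT_zero_of_monotoneOn_exp_mul {I : ℝ → ℝ} {lam R : ℝ} (hR : 0 < R)
    (hmono : MonotoneOn (fun r => Real.exp (lam * r) * I r) (Ioc 0 R))
    (hI : ∀ r ∈ Ioc 0 R, 0 ≤ I r) : ∃ I₀, Tendsto I (𝓝[>] 0) (𝓝 I₀) := by
  have hbdd : BddBelow ((fun r => Real.exp (lam * r) * I r) '' Ioo 0 R) := by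
    refine ⟨0, ?_⟩
    rintro _ ⟨r, hr, rfl⟩
    exact mul_nonneg (Real.exp_pos _).le (hI r (Ioo_subset_Ioc_self hr))
  have hJ := (hmono.mono Ioo_subset_Ioc_self).tendsto_nhdsWithin_Ioo_right (nonempty_Ioo.2 hR) hbdd
  have hexp : Tendsto (fun r => Real.exp (-(lam * r))) (𝓝[>] 0) (𝓝 1) :=
    ((by fun_prop : Continuous fun r => Real.exp (-(lam * r))).tendsto' 0 1 (by simp)).mono_left
      nhdsWithin_le_nhds
  refine ⟨_, (hexp.mul hJ).congr fun r => ?_⟩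
  rw [← mul_assoc, ← Real.exp_add]
  simp

theorem frequency_improved_almost_monotone_general (m : ℕ) (hm : 2 ≤ m) (C₀ r₀ : ℝ) (hC₀ : 0 < C₀)
    (hr₀ : 0 < r₀) (D H E G F : ℝ → ℝ)
    (hDdiff : ∀ r ∈ Ioc (0 : ℝ) r₀, DifferentiableAt ℝ D r)
    (hHdiff : ∀ r ∈ Ioc (0 : ℝ) r₀, DifferentiableAt ℝ H r)
    (hDpos : ∀ r ∈ Ioc (0 : ℝ) r₀, 0 < D r)
    (hHpos : ∀ r ∈ Ioc (0 : ℝ) r₀, 0 < H r)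
    (hDmono : MonotoneOn D (Ioc (0 : ℝ) r₀))
    (hFdiff : ∀ r ∈ Ioc (0 : ℝ) r₀, DifferentiableAt ℝ F r)
    (hFnonneg : ∀ r ∈ Ioc (0 : ℝ) r₀, 0 ≤ F r)
    (hF' : ∀ r ∈ Ioc (0 : ℝ) r₀, deriv F r = H r)
    (h1 : ∀ r ∈ Ioc (0 : ℝ) r₀, |D r - E r| ≤ C₀ * F r)
    (h2 : ∀ r ∈ Ioc (0 : ℝ) r₀,
      |deriv D r - 2 * G r - (((m : ℝ) - 2) / r) * D r| ≤
        C₀ * (r * D r + Real.sqrt (D r * F r)))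
    (h3 : ∀ r ∈ Ioc (0 : ℝ) r₀,
      |deriv H r - (((m : ℝ) - 1) / r) * H r - 2 * E r| ≤ C₀ * r * H r)
    (h4 : ∀ r ∈ Ioc (0 : ℝ) r₀, (E r) ^ 2 ≤ G r * H r)
    (h5' : ∀ r ∈ Ioc (0 : ℝ) r₀, F r ≤ C₀ * r ^ 2 * D r) :
    ∃ r₁ : ℝ, 0 < r₁ ∧ r₁ ≤ r₀ ∧ ∃ lam : ℝ, 0 < lam ∧
      MonotoneOn (fun r : ℝ => Real.exp (lam * r) * (r * D r / H r)) (Ioc (0 : ℝ) r₁) ∧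
      ∃ I₀ : ℝ, Tendsto (fun r : ℝ => r * D r / H r) (𝓝[>] (0 : ℝ)) (𝓝 I₀) := by
  set r₁ := min r₀ (min 1 (1 / (2 * C₀)))
  have hr₁ : 0 < r₁ := lt_min hr₀ (lt_min one_pos (by positivity))
  have hsub : Ioc 0 r₁ ⊆ Ioc 0 r₀ := Ioc_subset_Ioc_right (min_le_left _ _)
  have hCr₁ : C₀ * r₁ ≤ 1 / 2 := by
    have := (min_le_right r₀ _).trans (min_le_right 1 (1 / (2 * C₀)))
    rw [le_div_iff₀ (by positivity)] at this
    linarith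
  have hm1 : (1 : ℝ) ≤ m := by exact_mod_cast one_le_two.trans hm
  have restrict {P : ℝ → Prop} (h : ∀ r ∈ Ioc 0 r₀, P r) : ∀ r ∈ Ioc 0 r₁, P r :=
    fun r hr => h r (hsub hr)
  have hmono := monotoneOn_exp_mul_frequency hm1 hC₀.le ((min_le_right _ _).trans (min_le_left _ _))
    hCr₁ (restrict hDdiff) (restrict hHdiff) (restrict hDpos) (restrict hHpos) (hDmono.mono hsub)
    (restrict hFdiff) (restrict hFnonneg) (restrict hF') (restrict h1) (restrict h2) (restrict h3)
    (restrict h4) (restrict h5')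
  refine ⟨r₁, hr₁, min_le_left _ _, _, by positivity, hmono,
    exists_tendsto_nhdsGT_zero_of_monotoneOn_exp_mul hr₁ hmono fun r hr =>
      div_nonneg (mul_nonneg hr.1.le (hDpos r (hsub hr)).le) (hHpos r (hsub hr)).le⟩

/-- Improved almost monotonicity of the frequency function, real-variable form. -/
theorem frequency_improved_almost_monotone (m : ℕ) (hm : 2 ≤ m) (C₀ r₀ : ℝ) (hC₀ : 0 < C₀)
    (hr₀ : 0 < r₀) (hr₀1 : r₀ ≤ 1) (D H E G F : ℝ → ℝ)
    (hDdiff : ∀ r ∈ Ioc (0 : ℝ) r₀, DifferentiableAt ℝ D r)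
    (hHdiff : ∀ r ∈ Ioc (0 : ℝ) r₀, DifferentiableAt ℝ H r)
    (hDpos : ∀ r ∈ Ioc (0 : ℝ) r₀, 0 < D r)
    (hHpos : ∀ r ∈ Ioc (0 : ℝ) r₀, 0 < H r)
    (hDmono : MonotoneOn D (Ioc (0 : ℝ) r₀))
    (hFdiff : ∀ r ∈ Ioc (0 : ℝ) r₀, DifferentiableAt ℝ F r)
    (hFnonneg : ∀ r ∈ Ioc (0 : ℝ) r₀, 0 ≤ F r)
    (hF' : ∀ r ∈ Ioc (0 : ℝ) r₀, deriv F r = H r)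
    (h1 : ∀ r ∈ Ioc (0 : ℝ) r₀, |D r - E r| ≤ C₀ * F r)
    (h2 : ∀ r ∈ Ioc (0 : ℝ) r₀,
      |deriv D r - 2 * G r - (((m : ℝ) - 2) / r) * D r| ≤
        C₀ * (r * D r + Real.sqrt (D r * F r)))
    (h3 : ∀ r ∈ Ioc (0 : ℝ) r₀,
      |deriv H r - (((m : ℝ) - 1) / r) * H r - 2 * E r| ≤ C₀ * r * H r)
    (h4 : ∀ r ∈ Ioc (0 : ℝ) r₀, (E r) ^ 2 ≤ G r * H r)
    (h5' : ∀ r ∈ Ioc (0 : ℝ) r₀, F r ≤ C₀ * r ^ 2 * D r) :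
    ∃ r₁ : ℝ, 0 < r₁ ∧ r₁ ≤ r₀ ∧ ∃ lam : ℝ, 0 < lam ∧
      MonotoneOn (fun r : ℝ => Real.exp (lam * r) * (r * D r / H r)) (Ioc (0 : ℝ) r₁) ∧
      ∃ I₀ : ℝ, Tendsto (fun r : ℝ => r * D r / H r) (𝓝[>] (0 : ℝ)) (𝓝 I₀) :=
  frequency_improved_almost_monotone_general m hm C₀ r₀ hC₀ hr₀ D H E G F hDdiff hHdiff hDpos hHpos
    hDmono hFdiff hFnonneg hF' h1 h2 h3 h4 h5'
end
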